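/- arXiv:gr-qc/9303007 — 4 statements merged into one kernel-verified Lean document; each statement's English description precedes it below -/
import Mathlib

section
/- Suppose L is differentiable at c, L'(c) ≠ 0, and c satisfies L'(c)·c − (n/2)·L(c) = 0 with n ≥ 2. If a symmetric bilinear form Ric and a metric g (a nondegenerate symmetric bilinear form with trace of the identity equal to n, i.e., g^{μν}g_{μν} = n) satisfy the field equation L'(c)·Ric_{μν} − (1/2)·L(c)·g_{μν} = 0 together with g^{μν}·Ric_{μν} = c, then Ric_{μν} = (c/n)·g_{μν}, i.e., the Einstein equation with cosmological constant Λ = c/n holds. -/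
/-- At a solution `c` of the trace equation with `L'(c) ≠ 0`, the field
equation `L'(c) • Ric - (1/2) L(c) • g = 0` together with the trace condition
`g^{μν} Ric_{μν} = c` forces the Einstein equation `Ric = (c/n) • g`.
Pointwise linear-algebra setting: `g`, `Ric` are symmetric matrices, `g`
nondegenerate, traces taken with the inverse metric. -/
theorem field_equation_reduces_to_einstein
    (n : ℕ) (hn : 2 ≤ n) (L : ℝ → ℝ) (c : ℝ)
    (hd : DifferentiableAt ℝ L c) (h' : deriv L c ≠ 0)
    (htrace_eq : deriv L c * c - (n / 2 : ℝ) * L c = 0)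
    (Ric g : Matrix (Fin n) (Fin n) ℝ)
    (hRic : Ric.IsSymm) (hg : g.IsSymm) (hgdet : IsUnit g.det)
    (hid : (g⁻¹ * g).trace = (n : ℝ))
    (hfield : deriv L c • Ric - ((1 / 2 : ℝ) * L c) • g = 0)
    (hscalar : (g⁻¹ * Ric).trace = c) :
    Ric = (c / n : ℝ) • g := by
  have hn0 : (n : ℝ) ≠ 0 := by positivity
  set a := deriv L c with ha
  have h1 : a • Ric = ((1 / 2 : ℝ) * L c) • g := by
    rwa [sub_eq_zero] at hfield
  have hcoef : (1 / 2 : ℝ) * L c = a * (c / n) := by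
    field_simp
    nlinarith [htrace_eq]
  rw [hcoef, mul_smul] at h1
  exact smul_right_injective _ h' h1
end

section
/- Let n > 2 and let h be a metric satisfying the Einstein condition Ric_{μν} = h_{μν} (pointwise), and let g_{μν} = e^{−ω}·h_{μν} for an arbitrary real ω. Then R := g^{μν}Ric_{μν} = n·e^{ω} > 0 and the traceless equation Ric_{μν} − (1/n)·R·g_{μν} = 0 holds; moreover R^{(n−2)/2}·√g·g^{μν} = n^{(n−2)/2}·√h·h^{μν}. -/
/-- If `h` is an Einstein metric with `Ric = h` and `g = e^{-ω} • h` is a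
conformal rescaling, then `R := g^{μν} Ric_{μν} = n e^ω > 0`, the pair
`(g, Ric)` satisfies the traceless equation `Ric - (R/n) • g = 0`, and
`R^((n-2)/2) √g g^{μν} = n^((n-2)/2) √h h^{μν}`. -/
theorem conformal_rescaling_of_einstein_metric_solves
    (n : ℕ) (hn : 2 < n) (ω : ℝ)
    (h Ric : Matrix (Fin n) (Fin n) ℝ)
    (hh : h.IsSymm) (hdet : IsUnit h.det)
    (hEin : Ric = h) :
    ((((Real.exp (-ω) • h : Matrix (Fin n) (Fin n) ℝ))⁻¹ * Ric).trace
        = (n : ℝ) * Real.exp ω) ∧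
    (0 < (((Real.exp (-ω) • h : Matrix (Fin n) (Fin n) ℝ))⁻¹ * Ric).trace) ∧
    (Ric - (((((Real.exp (-ω) • h : Matrix (Fin n) (Fin n) ℝ))⁻¹ * Ric).trace
        / n : ℝ)) • (Real.exp (-ω) • h : Matrix (Fin n) (Fin n) ℝ) = 0) ∧
    ((((((Real.exp (-ω) • h : Matrix (Fin n) (Fin n) ℝ))⁻¹ * Ric).trace
          ^ (((n : ℝ) - 2) / 2)) *
        Real.sqrt |(Real.exp (-ω) • h : Matrix (Fin n) (Fin n) ℝ).det|) •
          (Real.exp (-ω) • h : Matrix (Fin n) (Fin n) ℝ)⁻¹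
      = ((n : ℝ) ^ (((n : ℝ) - 2) / 2) * Real.sqrt |h.det|) • h⁻¹) := by
  have hexp : Real.exp (-ω) ≠ 0 := (Real.exp_pos _).ne'
  haveI : Invertible (Real.exp (-ω)) := invertibleOfNonzero hexp
  have hinv : (Real.exp (-ω) • h : Matrix (Fin n) (Fin n) ℝ)⁻¹
      = Real.exp ω • h⁻¹ := by
    rw [Matrix.inv_smul h _ hdet]
    congr 1
    simp [invOf_eq_inv, Real.exp_neg]
  have hhinv : h⁻¹ * h = 1 := Matrix.nonsing_inv_mul h hdet
  have hnpos : (0 : ℝ) < n := by positivity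
  have htr : (((Real.exp (-ω) • h : Matrix (Fin n) (Fin n) ℝ))⁻¹ * Ric).trace
      = (n : ℝ) * Real.exp ω := by
    rw [hinv, hEin, Matrix.smul_mul, hhinv, Matrix.trace_smul, Matrix.trace_one]
    simp [mul_comm]
  refine ⟨htr, by rw [htr]; positivity, ?_, ?_⟩
  · rw [htr, hEin]
    rw [mul_comm, mul_div_assoc, div_self hnpos.ne', mul_one, smul_smul,
      ← Real.exp_add]
    simp
  · rw [htr, hinv, Matrix.det_smul, smul_smul]
    congr 1
    rw [abs_mul, Real.sqrt_mul (abs_nonneg _), abs_pow, abs_of_pos (Real.exp_pos _)]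
    have hs : Real.sqrt (Real.exp (-ω) ^ Fintype.card (Fin n))
        = Real.exp (-ω * n / 2) := by
      rw [← Real.exp_nat_mul]
      rw [show (Fintype.card (Fin n) : ℝ) * -ω = 2 * (-ω * n / 2) by
        simp; ring]
      rw [two_mul, Real.exp_add, Real.sqrt_mul_self (Real.exp_pos _).le]
    have hrp : ((n : ℝ) * Real.exp ω) ^ (((n : ℝ) - 2) / 2)
        = (n : ℝ) ^ (((n : ℝ) - 2) / 2) * Real.exp (ω * (((n : ℝ) - 2) / 2)) := by
      rw [Real.mul_rpow (le_of_lt hnpos) (Real.exp_pos ω).le, ← Real.exp_mul]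
    have e1 : Real.exp (ω * (((n : ℝ) - 2) / 2)) * Real.exp (-ω * ↑n / 2)
        * Real.exp ω = 1 := by
      rw [← Real.exp_add, ← Real.exp_add,
        show ω * (((n : ℝ) - 2) / 2) + -ω * ↑n / 2 + ω = 0 by ring, Real.exp_zero]
    rw [hs, hrp]
    linear_combination ((n : ℝ) ^ (((n : ℝ) - 2) / 2) * Real.sqrt |h.det|) * e1
end

section
/- In dimension n = 2, the Weyl connection W(g,B) satisfies ∇_α(√g·g^{μν}) = 0, where ∇ is the covariant derivative with respect to W(g,B) acting on the tensor density √g·g^{μν}; moreover every torsionless connection Γ satisfying ∇_α(√g·g^{μν}) = 0 in dimension 2 is of the form W(g,B) for some vector field B. -/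
open scoped BigOperators

/-- Partial derivative `∂_μ f` in coordinates on `ℝⁿ`. -/
noncomputable def pd {n : ℕ} (f : (Fin n → ℝ) → ℝ) (μ : Fin n)
    (x : Fin n → ℝ) : ℝ :=
  fderiv ℝ f x (Pi.single μ 1)

/-- Christoffel symbols `Γ^σ_{μν}(g)` of the Levi-Civita connection of `g`. -/
noncomputable def christoffel {n : ℕ}
    (g : (Fin n → ℝ) → Matrix (Fin n) (Fin n) ℝ)
    (x : Fin n → ℝ) (σ μ ν : Fin n) : ℝ :=
  (1 / 2) * ∑ α, (g x)⁻¹ σ α *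
    (pd (fun y => g y ν α) μ x + pd (fun y => g y μ α) ν x
      - pd (fun y => g y μ ν) α x)

/-- Lowered index `B_μ = g_{μα} B^α`. -/
noncomputable def lowerIdx {n : ℕ}
    (g : (Fin n → ℝ) → Matrix (Fin n) (Fin n) ℝ)
    (B : (Fin n → ℝ) → Fin n → ℝ) (x : Fin n → ℝ) (μ : Fin n) : ℝ :=
  ∑ α, g x μ α * B x α

/-- Weyl connection
`W^σ_{μν} = Γ^σ_{μν}(g) + (1/2)(δ^σ_ν B_μ + δ^σ_μ B_ν - g_{μν} B^σ)`. -/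
noncomputable def weyl {n : ℕ}
    (g : (Fin n → ℝ) → Matrix (Fin n) (Fin n) ℝ)
    (B : (Fin n → ℝ) → Fin n → ℝ)
    (x : Fin n → ℝ) (σ μ ν : Fin n) : ℝ :=
  christoffel g x σ μ ν +
    (1 / 2) * ((if σ = ν then lowerIdx g B x μ else 0)
      + (if σ = μ then lowerIdx g B x ν else 0) - g x μ ν * B x σ)

/-- Covariant derivative `∇_α(√g g^{μν})` of the weight-1 tensor density
`√g g^{μν}` with respect to a connection `Γ`:
`∂_α(√g g^{μν}) + Γ^μ_{βα} √g g^{βν} + Γ^ν_{βα} √g g^{μβ}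
  - Γ^β_{βα} √g g^{μν}`. -/
noncomputable def densCovDeriv {n : ℕ}
    (g : (Fin n → ℝ) → Matrix (Fin n) (Fin n) ℝ)
    (Γ : (Fin n → ℝ) → Fin n → Fin n → Fin n → ℝ)
    (x : Fin n → ℝ) (α μ ν : Fin n) : ℝ :=
  pd (fun y => Real.sqrt |(g y).det| * (g y)⁻¹ μ ν) α x
    + ∑ β, Γ x μ β α * (Real.sqrt |(g x).det| * (g x)⁻¹ β ν)
    + ∑ β, Γ x ν β α * (Real.sqrt |(g x).det| * (g x)⁻¹ μ β)
    - ∑ β, Γ x β β α * (Real.sqrt |(g x).det| * (g x)⁻¹ μ ν)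

/- ### Auxiliary lemmas -/

lemma pd_mul' {n : ℕ} {f h : (Fin n → ℝ) → ℝ} {x : Fin n → ℝ} (α : Fin n)
    (hf : DifferentiableAt ℝ f x) (hh : DifferentiableAt ℝ h x) :
    pd (fun y => f y * h y) α x = pd f α x * h x + f x * pd h α x := by
  unfold pd; rw [fderiv_fun_mul hf hh]; simp; ring

lemma pd_sub' {n : ℕ} {f h : (Fin n → ℝ) → ℝ} {x : Fin n → ℝ} (α : Fin n)
    (hf : DifferentiableAt ℝ f x) (hh : DifferentiableAt ℝ h x) :
    pd (fun y => f y - h y) α x = pd f α x - pd h α x := by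
  unfold pd; rw [fderiv_fun_sub hf hh]; simp

lemma pd_neg' {n : ℕ} {f : (Fin n → ℝ) → ℝ} {x : Fin n → ℝ} (α : Fin n) :
    pd (fun y => -f y) α x = -pd f α x := by
  unfold pd; rw [fderiv_fun_neg]; simp

lemma pd_inv' {n : ℕ} {h : (Fin n → ℝ) → ℝ} {x : Fin n → ℝ} (α : Fin n)
    (hh : DifferentiableAt ℝ h x) (hx : h x ≠ 0) :
    pd (fun y => (h y)⁻¹) α x = -pd h α x / h x ^ 2 := by
  unfold pd
  have hd : HasFDerivAt (fun y => (h y)⁻¹) ((-(h x ^ 2)⁻¹) • fderiv ℝ h x) x :=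
    (hasDerivAt_inv hx).comp_hasFDerivAt x hh.hasFDerivAt
  rw [hd.fderiv]; simp; field_simp

lemma pd_div' {n : ℕ} {f h : (Fin n → ℝ) → ℝ} {x : Fin n → ℝ} (α : Fin n)
    (hf : DifferentiableAt ℝ f x) (hh : DifferentiableAt ℝ h x) (hx : h x ≠ 0) :
    pd (fun y => f y / h y) α x = (pd f α x * h x - f x * pd h α x) / h x ^ 2 := by
  have : (fun y => f y / h y) = fun y => f y * (h y)⁻¹ := by
    funext y; rw [div_eq_mul_inv]
  rw [this, pd_mul' (h := fun y => (h y)⁻¹) α hf (hh.inv hx), pd_inv' α hh hx]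
  field_simp; ring

lemma diffAt_sqrt_abs {n : ℕ} {f : (Fin n → ℝ) → ℝ} {x : Fin n → ℝ}
    (hf : DifferentiableAt ℝ f x) (hc : Continuous f) (hx : f x ≠ 0) :
    DifferentiableAt ℝ (fun y => Real.sqrt |f y|) x := by
  rcases hx.lt_or_gt with hneg | hpos
  · have hev : (fun y => Real.sqrt |f y|) =ᶠ[nhds x] fun y => Real.sqrt (-f y) := by
      filter_upwards [hc.continuousAt.eventually_lt continuousAt_const hneg] with y hy
      rw [abs_of_neg hy]
    have hd : HasFDerivAt (fun y => Real.sqrt (-f y))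
        ((1 / (2 * Real.sqrt (-f x))) • fderiv ℝ (fun y => -f y) x) x :=
      (Real.hasDerivAt_sqrt (by linarith)).comp_hasFDerivAt x (hf.neg.hasFDerivAt)
    exact (Filter.EventuallyEq.differentiableAt_iff hev).2 hd.differentiableAt
  · have hev : (fun y => Real.sqrt |f y|) =ᶠ[nhds x] fun y => Real.sqrt (f y) := by
      filter_upwards [continuousAt_const.eventually_lt hc.continuousAt hpos] with y hy
      rw [abs_of_pos hy]
    have hd : HasFDerivAt (fun y => Real.sqrt (f y))
        ((1 / (2 * Real.sqrt (f x))) • fderiv ℝ f x) x :=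
      (Real.hasDerivAt_sqrt (ne_of_gt hpos)).comp_hasFDerivAt x hf.hasFDerivAt
    exact (Filter.EventuallyEq.differentiableAt_iff hev).2 hd.differentiableAt

lemma pd_sqrt_abs' {n : ℕ} {f : (Fin n → ℝ) → ℝ} {x : Fin n → ℝ} (α : Fin n)
    (hf : DifferentiableAt ℝ f x) (hc : Continuous f) (hx : f x ≠ 0) :
    pd (fun y => Real.sqrt |f y|) α x
      = pd f α x * Real.sqrt |f x| / (2 * f x) := by
  rcases hx.lt_or_gt with hneg | hpos
  · have hev : (fun y => Real.sqrt |f y|) =ᶠ[nhds x] fun y => Real.sqrt (-f y) := by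
      filter_upwards [hc.continuousAt.eventually_lt continuousAt_const hneg] with y hy
      rw [abs_of_neg hy]
    have hd : HasFDerivAt (fun y => Real.sqrt (-f y))
        ((1 / (2 * Real.sqrt (-f x))) • fderiv ℝ (fun y => -f y) x) x :=
      (Real.hasDerivAt_sqrt (by linarith)).comp_hasFDerivAt x (hf.neg.hasFDerivAt)
    unfold pd
    rw [Filter.EventuallyEq.fderiv_eq hev, hd.fderiv]
    have h1 : fderiv ℝ (fun y => -f y) x = -fderiv ℝ f x := fderiv_fun_neg
    rw [h1]
    set s := Real.sqrt (-f x) with hsdef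
    have hspos : 0 < s := Real.sqrt_pos.2 (by linarith)
    have hs : s * s = -f x := Real.mul_self_sqrt (by linarith)
    have habs : |f x| = -f x := abs_of_neg hneg
    have hfx : f x = -(s * s) := by linarith
    simp only [ContinuousLinearMap.smul_apply, ContinuousLinearMap.neg_apply, habs, hsdef.symm,
      hfx]
    rw [abs_neg, abs_of_nonneg (mul_self_nonneg s), Real.sqrt_mul_self hspos.le]
    field_simp [hspos.ne']
    rw [smul_eq_mul, ← mul_assoc, mul_one_div_cancel (mul_ne_zero two_ne_zero hspos.ne'), one_mul]
  · have hev : (fun y => Real.sqrt |f y|) =ᶠ[nhds x] fun y => Real.sqrt (f y) := by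
      filter_upwards [continuousAt_const.eventually_lt hc.continuousAt hpos] with y hy
      rw [abs_of_pos hy]
    have hd : HasFDerivAt (fun y => Real.sqrt (f y))
        ((1 / (2 * Real.sqrt (f x))) • fderiv ℝ f x) x :=
      (Real.hasDerivAt_sqrt (ne_of_gt hpos)).comp_hasFDerivAt x hf.hasFDerivAt
    unfold pd
    rw [Filter.EventuallyEq.fderiv_eq hev, hd.fderiv]
    set s := Real.sqrt (f x) with hsdef
    have hspos : 0 < s := Real.sqrt_pos.2 hpos
    have hs : s * s = f x := Real.mul_self_sqrt hpos.le
    have habs : |f x| = f x := abs_of_pos hpos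
    have hfx : f x = s * s := hs.symm
    simp only [ContinuousLinearMap.smul_apply, habs, hsdef.symm, hfx]
    rw [abs_of_nonneg (mul_self_nonneg s), Real.sqrt_mul_self hspos.le]
    field_simp [hspos.ne']
    rw [smul_eq_mul, ← mul_assoc, mul_one_div_cancel (mul_ne_zero two_ne_zero hspos.ne'), one_mul]

section DensityDeriv

variable {g : (Fin 2 → ℝ) → Matrix (Fin 2) (Fin 2) ℝ}
  (hg_smooth : ∀ μ ν : Fin 2, ContDiff ℝ (⊤ : ℕ∞) fun y => g y μ ν)
  (hg_det : ∀ y, IsUnit (g y).det)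

include hg_smooth

lemma gdiff (μ ν : Fin 2) : Differentiable ℝ (fun y => g y μ ν) :=
  (hg_smooth μ ν).differentiable (by simp)

omit hg_smooth in
lemma detfun_eq :
    (fun y => (g y).det) = fun y => g y 0 0 * g y 1 1 - g y 0 1 * g y 1 0 := by
  funext y; rw [Matrix.det_fin_two]

lemma gdiff_det : Differentiable ℝ (fun y => (g y).det) := by
  rw [detfun_eq (g := g)]
  exact ((gdiff hg_smooth 0 0).mul (gdiff hg_smooth 1 1)).sub
    ((gdiff hg_smooth 0 1).mul (gdiff hg_smooth 1 0))

lemma gdiff_adj (μ ν : Fin 2) : Differentiable ℝ (fun y => (g y).adjugate μ ν) := by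
  have h : (fun y => (g y).adjugate μ ν)
      = fun y => (!![g y 1 1, -g y 0 1; -g y 1 0, g y 0 0] : Matrix (Fin 2) (Fin 2) ℝ) μ ν := by
    funext y; rw [Matrix.adjugate_fin_two]
  rw [h]
  fin_cases μ <;> fin_cases ν <;> simp <;>
    first
      | exact gdiff hg_smooth _ _
      | exact (gdiff hg_smooth _ _).neg

lemma pd_det (x : Fin 2 → ℝ) (α : Fin 2) :
    pd (fun y => (g y).det) α x
      = pd (fun y => g y 0 0) α x * g x 1 1 + g x 0 0 * pd (fun y => g y 1 1) α x
        - (pd (fun y => g y 0 1) α x * g x 1 0 + g x 0 1 * pd (fun y => g y 1 0) α x) := by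
  rw [detfun_eq (g := g)]
  rw [pd_sub' (f := fun y => g y 0 0 * g y 1 1) (h := fun y => g y 0 1 * g y 1 0) α (((gdiff hg_smooth 0 0).mul (gdiff hg_smooth 1 1)) x)
      (((gdiff hg_smooth 0 1).mul (gdiff hg_smooth 1 0)) x),
    pd_mul' α ((gdiff hg_smooth 0 0) x) ((gdiff hg_smooth 1 1) x),
    pd_mul' α ((gdiff hg_smooth 0 1) x) ((gdiff hg_smooth 1 0) x)]

include hg_det

lemma pd_dens (x : Fin 2 → ℝ) (α μ ν : Fin 2) :
    pd (fun y => Real.sqrt |(g y).det| * (g y)⁻¹ μ ν) α x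
      = Real.sqrt |(g x).det| / (2 * (g x).det ^ 2) *
        (2 * (g x).det * pd (fun y => (g y).adjugate μ ν) α x
          - (g x).adjugate μ ν * pd (fun y => (g y).det) α x) := by
  have hd0 : ∀ y, (g y).det ≠ 0 := fun y => (hg_det y).ne_zero
  have heq : (fun y => Real.sqrt |(g y).det| * (g y)⁻¹ μ ν)
      = fun y => (Real.sqrt |(g y).det| * (g y).adjugate μ ν) / (g y).det := by
    funext y; rw [Matrix.inv_def]; simp [Ring.inverse_eq_inv']; ring
  have hdetc : Continuous (fun y => (g y).det) := (gdiff_det hg_smooth).continuous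
  have hdiffs : DifferentiableAt ℝ (fun y => Real.sqrt |(g y).det|) x :=
    diffAt_sqrt_abs ((gdiff_det hg_smooth) x) hdetc (hd0 x)
  rw [heq, pd_div' (f := fun y => Real.sqrt |(g y).det| * (g y).adjugate μ ν) α (hdiffs.mul ((gdiff_adj hg_smooth μ ν) x)) ((gdiff_det hg_smooth) x) (hd0 x),
    pd_mul' α hdiffs ((gdiff_adj hg_smooth μ ν) x),
    pd_sqrt_abs' α ((gdiff_det hg_smooth) x) hdetc (hd0 x)]
  field_simp [hd0 x]
  ring

end DensityDeriv


set_option maxHeartbeats 8000000 in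
lemma weyl_dens_zero (g : (Fin 2 → ℝ) → Matrix (Fin 2) (Fin 2) ℝ)
    (hg_smooth : ∀ μ ν : Fin 2, ContDiff ℝ (⊤ : ℕ∞) fun y => g y μ ν)
    (hg_symm : ∀ y, (g y).IsSymm)
    (hg_det : ∀ y, IsUnit (g y).det)
    (B : (Fin 2 → ℝ) → Fin 2 → ℝ) (x : Fin 2 → ℝ) (α μ ν : Fin 2) :
    densCovDeriv g (weyl g B) x α μ ν = 0 := by
  have hd0 : (g x).det ≠ 0 := (hg_det x).ne_zero
  have hs10 : ∀ y, g y 1 0 = g y 0 1 := fun y => (hg_symm y).apply 0 1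
  have hf10 : (fun y => g y 1 0) = (fun y => g y 0 1) := funext hs10
  have hinv : ∀ i j : Fin 2, (g x)⁻¹ i j = ((g x).det)⁻¹ * (g x).adjugate i j := by
    intro i j; rw [Matrix.inv_def]; simp [Ring.inverse_eq_inv']
  have ha00 : (fun y => (g y).adjugate (0:Fin 2) (0:Fin 2)) = fun y => g y 1 1 := by
    funext y; rw [Matrix.adjugate_fin_two]; simp
  have ha01 : (fun y => (g y).adjugate (0:Fin 2) (1:Fin 2)) = fun y => -g y 0 1 := by
    funext y; rw [Matrix.adjugate_fin_two]; simp
  have ha10 : (fun y => (g y).adjugate (1:Fin 2) (0:Fin 2)) = fun y => -g y 0 1 := by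
    funext y; rw [Matrix.adjugate_fin_two]; simp [hs10 y]
  have ha11 : (fun y => (g y).adjugate (1:Fin 2) (1:Fin 2)) = fun y => g y 0 0 := by
    funext y; rw [Matrix.adjugate_fin_two]; simp
  have hb00 : (g x).adjugate 0 0 = g x 1 1 := congrFun ha00 x
  have hb01 : (g x).adjugate 0 1 = -g x 0 1 := congrFun ha01 x
  have hb10 : (g x).adjugate 1 0 = -g x 0 1 := congrFun ha10 x
  have hb11 : (g x).adjugate 1 1 = g x 0 0 := congrFun ha11 x
  have hd0' : g x 0 0 * g x 1 1 - g x 0 1 * g x 0 1 ≠ 0 := by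
    rw [Matrix.det_fin_two, hs10 x] at hd0; exact hd0
  have hd0'' : g x 0 0 * g x 1 1 - g x 0 1 ^ 2 ≠ 0 := by rw [sq]; exact hd0'
  fin_cases α <;> fin_cases μ <;> fin_cases ν <;>
  · simp only [densCovDeriv, weyl, christoffel, lowerIdx]
    rw [pd_dens hg_smooth hg_det x, pd_det hg_smooth x]
    simp only [Fin.zero_eta, Fin.mk_one, Fin.isValue, Fin.sum_univ_two, hinv,
      Matrix.det_fin_two, hs10, hf10]
    simp only [Fin.zero_eta, Fin.mk_one, Fin.isValue, ha00, ha01, ha10, ha11, pd_neg',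
      hb00, hb01, hb10, hb11, reduceIte, hs10, hf10]
    simp only [show ((0:Fin 2) = 1) = False from by simp,
      show ((1:Fin 2) = 0) = False from by simp, if_false]
    field_simp [hd0', hd0'']
    ring

lemma christoffel_symm' (g : (Fin 2 → ℝ) → Matrix (Fin 2) (Fin 2) ℝ)
    (hg_symm : ∀ y, (g y).IsSymm) (x : Fin 2 → ℝ) (σ : Fin 2) :
    christoffel g x σ 1 0 = christoffel g x σ 0 1 := by
  have hfun : (fun y => g y 1 0) = fun y => g y 0 1 :=
    funext fun y => (hg_symm y).apply 0 1
  unfold christoffel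
  congr 1
  apply Finset.sum_congr rfl
  intro α _
  rw [hfun]
  ring

lemma weyl_zero_eq (g : (Fin 2 → ℝ) → Matrix (Fin 2) (Fin 2) ℝ)
    (x : Fin 2 → ℝ) (σ μ ν : Fin 2) :
    weyl g (fun _ _ => 0) x σ μ ν = christoffel g x σ μ ν := by
  simp [weyl, lowerIdx]

set_option maxHeartbeats 4000000 in
lemma part2 (g : (Fin 2 → ℝ) → Matrix (Fin 2) (Fin 2) ℝ)
    (hg_smooth : ∀ μ ν : Fin 2, ContDiff ℝ (⊤ : ℕ∞) fun y => g y μ ν)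
    (hg_symm : ∀ y, (g y).IsSymm)
    (hg_det : ∀ y, IsUnit (g y).det)
    (Γ : (Fin 2 → ℝ) → Fin 2 → Fin 2 → Fin 2 → ℝ)
    (hΓsymm : ∀ (x : Fin 2 → ℝ) (σ μ ν : Fin 2), Γ x σ μ ν = Γ x σ ν μ)
    (hΓeq : ∀ (x : Fin 2 → ℝ) (α μ ν : Fin 2), densCovDeriv g Γ x α μ ν = 0) :
    ∃ B : (Fin 2 → ℝ) → Fin 2 → ℝ,
      ∀ (x : Fin 2 → ℝ) (σ μ ν : Fin 2), Γ x σ μ ν = weyl g B x σ μ ν := by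
  refine ⟨fun x τ => ∑ i, (g x)⁻¹ τ i * (∑ β, (Γ x β β i - christoffel g x β β i)), ?_⟩
  intro x σ μ ν
  have hd0 : (g x).det ≠ 0 := (hg_det x).ne_zero
  have hs10 : ∀ y, g y 1 0 = g y 0 1 := fun y => (hg_symm y).apply 0 1
  have hinv : ∀ i j : Fin 2, (g x)⁻¹ i j = ((g x).det)⁻¹ * (g x).adjugate i j := by
    intro i j; rw [Matrix.inv_def]; simp [Ring.inverse_eq_inv']
  have hb00 : (g x).adjugate 0 0 = g x 1 1 := by rw [Matrix.adjugate_fin_two]; simp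
  have hb01 : (g x).adjugate 0 1 = -g x 0 1 := by rw [Matrix.adjugate_fin_two]; simp
  have hb10 : (g x).adjugate 1 0 = -g x 0 1 := by rw [Matrix.adjugate_fin_two]; simp [hs10 x]
  have hb11 : (g x).adjugate 1 1 = g x 0 0 := by rw [Matrix.adjugate_fin_two]; simp
  have hd0' : g x 0 0 * g x 1 1 - g x 0 1 * g x 0 1 ≠ 0 := by
    rw [Matrix.det_fin_two, hs10 x] at hd0; exact hd0
  have hS0 : Real.sqrt |(g x).det| ≠ 0 := Real.sqrt_ne_zero'.2 (abs_pos.2 hd0)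
  have hq0 : Real.sqrt |(g x).det| * ((g x).det)⁻¹ ≠ 0 := mul_ne_zero hS0 (inv_ne_zero hd0)
  have hLC : ∀ α μ ν : Fin 2, densCovDeriv g (weyl g (fun _ _ => 0)) x α μ ν = 0 :=
    fun α μ ν => weyl_dens_zero g hg_smooth hg_symm hg_det _ x α μ ν
  have key3 : ∀ α μ' ν' : Fin 2,
      ((Γ x μ' 0 α - christoffel g x μ' 0 α) * (g x).adjugate 0 ν'
        + (Γ x μ' 1 α - christoffel g x μ' 1 α) * (g x).adjugate 1 ν')
      + ((Γ x ν' 0 α - christoffel g x ν' 0 α) * (g x).adjugate μ' 0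
        + (Γ x ν' 1 α - christoffel g x ν' 1 α) * (g x).adjugate μ' 1)
      - ((Γ x 0 0 α - christoffel g x 0 0 α)
          + (Γ x 1 1 α - christoffel g x 1 1 α)) * (g x).adjugate μ' ν' = 0 := by
    intro α μ' ν'
    have h1 := hΓeq x α μ' ν'
    have h2 := hLC α μ' ν'
    simp only [densCovDeriv, Fin.sum_univ_two] at h1 h2
    simp only [weyl_zero_eq g x] at h2
    simp only [hinv] at h1 h2
    have h3 : Real.sqrt |(g x).det| * ((g x).det)⁻¹ *
        (((Γ x μ' 0 α - christoffel g x μ' 0 α) * (g x).adjugate 0 ν'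
          + (Γ x μ' 1 α - christoffel g x μ' 1 α) * (g x).adjugate 1 ν')
        + ((Γ x ν' 0 α - christoffel g x ν' 0 α) * (g x).adjugate μ' 0
          + (Γ x ν' 1 α - christoffel g x ν' 1 α) * (g x).adjugate μ' 1)
        - ((Γ x 0 0 α - christoffel g x 0 0 α)
            + (Γ x 1 1 α - christoffel g x 1 1 α)) * (g x).adjugate μ' ν') = 0 := by
      linear_combination h1 - h2
    exact (mul_eq_zero.1 h3).resolve_left hq0
  have hts : ∀ τ : Fin 2, Γ x τ 1 0 = Γ x τ 0 1 := fun τ => (hΓsymm x τ 0 1).symm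
  have htc : ∀ τ : Fin 2, christoffel g x τ 1 0 = christoffel g x τ 0 1 :=
    fun τ => christoffel_symm' g hg_symm x τ
  have h1 := key3 0 0 0
  have h2 := key3 0 0 1
  have h3 := key3 0 1 1
  have h4 := key3 1 0 0
  have h5 := key3 1 0 1
  have h6 := key3 1 1 1
  simp only [hb00, hb01, hb10, hb11, hts, htc] at h1 h2 h3 h4 h5 h6
  have hG1 : (Γ x 0 0 0 - christoffel g x 0 0 0) * (g x 0 0 * g x 1 1 - g x 0 1 * g x 0 1)
      = (1/2) * (((Γ x 0 0 0 - christoffel g x 0 0 0) + (Γ x 1 0 1 - christoffel g x 1 0 1))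
            * (g x 0 0 * g x 1 1 - 2*(g x 0 1 * g x 0 1))
          + g x 0 0 * g x 0 1 * ((Γ x 0 0 1 - christoffel g x 0 0 1)
            + (Γ x 1 1 1 - christoffel g x 1 1 1))) := by
    linear_combination (g x 0 0 / 2) * h1 - (g x 0 1 / 2) * h6
  have hG2 : (Γ x 0 0 1 - christoffel g x 0 0 1) * (g x 0 0 * g x 1 1 - g x 0 1 * g x 0 1)
      = (1/2) * (g x 0 0 * g x 1 1 * ((Γ x 0 0 1 - christoffel g x 0 0 1)
            + (Γ x 1 1 1 - christoffel g x 1 1 1))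
          - g x 0 1 * g x 1 1 * ((Γ x 0 0 0 - christoffel g x 0 0 0)
            + (Γ x 1 0 1 - christoffel g x 1 0 1))) := by
    linear_combination (g x 0 0 / 2) * h4 + (g x 0 1) * h5 + (g x 0 1 / 2) * h1
  have hG3 : (Γ x 0 1 1 - christoffel g x 0 1 1) * (g x 0 0 * g x 1 1 - g x 0 1 * g x 0 1)
      = (1/2) * (-(g x 1 1 * g x 1 1) * ((Γ x 0 0 0 - christoffel g x 0 0 0)
            + (Γ x 1 0 1 - christoffel g x 1 0 1))
          + g x 0 1 * g x 1 1 * ((Γ x 0 0 1 - christoffel g x 0 0 1)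
            + (Γ x 1 1 1 - christoffel g x 1 1 1))) := by
    linear_combination (g x 1 1) * h5 + (g x 1 1 / 2) * h1 + (g x 0 1 / 2) * h4
  have hG4 : (Γ x 1 0 0 - christoffel g x 1 0 0) * (g x 0 0 * g x 1 1 - g x 0 1 * g x 0 1)
      = (1/2) * (-(g x 0 0 * g x 0 0) * ((Γ x 0 0 1 - christoffel g x 0 0 1)
            + (Γ x 1 1 1 - christoffel g x 1 1 1))
          + g x 0 0 * g x 0 1 * ((Γ x 0 0 0 - christoffel g x 0 0 0)
            + (Γ x 1 0 1 - christoffel g x 1 0 1))) := by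
    linear_combination (g x 0 0) * h2 + (g x 0 1 / 2) * h3 + (g x 0 0 / 2) * h6
  have hG5 : (Γ x 1 0 1 - christoffel g x 1 0 1) * (g x 0 0 * g x 1 1 - g x 0 1 * g x 0 1)
      = (1/2) * (g x 0 0 * g x 1 1 * ((Γ x 0 0 0 - christoffel g x 0 0 0)
            + (Γ x 1 0 1 - christoffel g x 1 0 1))
          - g x 0 0 * g x 0 1 * ((Γ x 0 0 1 - christoffel g x 0 0 1)
            + (Γ x 1 1 1 - christoffel g x 1 1 1))) := by
    linear_combination -(g x 0 0 / 2) * h1 + (g x 0 1 / 2) * h6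
  have hG6 : (Γ x 1 1 1 - christoffel g x 1 1 1) * (g x 0 0 * g x 1 1 - g x 0 1 * g x 0 1)
      = (1/2) * ((g x 0 0 * g x 1 1 - 2*(g x 0 1 * g x 0 1)) * ((Γ x 0 0 1 - christoffel g x 0 0 1)
            + (Γ x 1 1 1 - christoffel g x 1 1 1))
          + g x 0 1 * g x 1 1 * ((Γ x 0 0 0 - christoffel g x 0 0 0)
            + (Γ x 1 0 1 - christoffel g x 1 0 1))) := by
    linear_combination (g x 1 1 / 2) * h6 - (g x 0 1 / 2) * h1
  have hv1 := (eq_div_iff hd0').2 hG1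
  have hv2 := (eq_div_iff hd0').2 hG2
  have hv3 := (eq_div_iff hd0').2 hG3
  have hv4 := (eq_div_iff hd0').2 hG4
  have hv5 := (eq_div_iff hd0').2 hG5
  have hv6 := (eq_div_iff hd0').2 hG6
  fin_cases σ <;> fin_cases μ <;> fin_cases ν <;>
    simp only [weyl, lowerIdx, Fin.sum_univ_two, hinv, hb00, hb01, hb10, hb11,
      Matrix.det_fin_two, hs10, hts, htc, Fin.mk_zero, Fin.mk_one, Fin.isValue, reduceIte,
      show ((0:Fin 2) = 1) = False from by simp,
      show ((1:Fin 2) = 0) = False from by simp, if_false]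
  · linear_combination hv1
  · linear_combination hv2
  · linear_combination hv2
  · linear_combination hv3
  · linear_combination hv4
  · linear_combination hv5
  · linear_combination hv5
  · linear_combination hv6

/-- In dimension 2: every Weyl connection `W(g,B)` satisfies
`∇_α(√g g^{μν}) = 0`, and conversely every smooth torsionless connection
satisfying `∇_α(√g g^{μν}) = 0` is a Weyl connection `W(g,B)` for some
vector field `B`. -/
theorem weyl_connection_solves_density_equation_two_dim
    (g : (Fin 2 → ℝ) → Matrix (Fin 2) (Fin 2) ℝ)
    (hg_smooth : ∀ μ ν : Fin 2, ContDiff ℝ (⊤ : ℕ∞) fun y => g y μ ν)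
    (hg_symm : ∀ y, (g y).IsSymm)
    (hg_det : ∀ y, IsUnit (g y).det) :
    (∀ B : (Fin 2 → ℝ) → Fin 2 → ℝ,
      (∀ α : Fin 2, ContDiff ℝ (⊤ : ℕ∞) fun y => B y α) →
      ∀ (x : Fin 2 → ℝ) (α μ ν : Fin 2),
        densCovDeriv g (weyl g B) x α μ ν = 0) ∧
    (∀ Γ : (Fin 2 → ℝ) → Fin 2 → Fin 2 → Fin 2 → ℝ,
      (∀ σ μ ν : Fin 2, ContDiff ℝ (⊤ : ℕ∞) fun y => Γ y σ μ ν) →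
      (∀ (x : Fin 2 → ℝ) (σ μ ν : Fin 2), Γ x σ μ ν = Γ x σ ν μ) →
      (∀ (x : Fin 2 → ℝ) (α μ ν : Fin 2),
        densCovDeriv g Γ x α μ ν = 0) →
      ∃ B : (Fin 2 → ℝ) → Fin 2 → ℝ,
        ∀ (x : Fin 2 → ℝ) (σ μ ν : Fin 2),
          Γ x σ μ ν = weyl g B x σ μ ν) := by
  constructor
  · intro B _ x α μ ν
    exact weyl_dens_zero g hg_smooth hg_symm hg_det B x α μ ν
  · intro Γ _ hΓsymm hΓeq
    exact part2 g hg_smooth hg_symm hg_det Γ hΓsymm hΓeq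
end

section
/- Suppose matter is coupled minimally so that the trace equation becomes L'(R)·R − (n/2)·L(R) = T for a constant T. If L is analytic and L'(R)·R − (n/2)·L(R) − T is not identically zero, then the solution set {R : L'(R)R − (n/2)L(R) = T} is discrete, and at each solution c with L'(c) ≠ 0 the field equation L'(c)Ric_{μν} − (1/2)L(c)g_{μν} = T_{μν} with T_{μν} = (T/n)g_{μν} forces Ric_{μν} = (L(c)/(2L'(c)) + T/(n·L'(c)))·g_{μν}, i.e., Einstein equations with a shifted cosmological constant. -/
open Topology Filter

/-- With matter of constant trace `T` minimally coupled, the trace equation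
becomes `L'(R) R - (n/2) L R = T`.  If `L` is analytic and
`L'(R) R - (n/2) L R - T` is not identically zero, then the solution set is
discrete, and at each solution `c` with `L'(c) ≠ 0` the field equation
`L'(c) • Ric - (1/2) L(c) • g = (T/n) • g` (with isotropic energy–momentum
tensor `T_{μν} = (T/n) g_{μν}`) forces the Einstein equations
`Ric = (L c/(2 L'(c)) + T/(n L'(c))) • g` with a shifted cosmological
constant. -/
theorem universality_with_matter
    (n : ℕ) (hn : 2 ≤ n) (L : ℝ → ℝ) (hL : AnalyticOn ℝ L Set.univ)
    (T : ℝ)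
    (hne : ∃ R : ℝ, deriv L R * R - (n / 2 : ℝ) * L R - T ≠ 0) :
    (∀ x : ℝ, ¬ AccPt x (Filter.principal
      {R : ℝ | deriv L R * R - (n / 2 : ℝ) * L R = T})) ∧
    (∀ c : ℝ, deriv L c * c - (n / 2 : ℝ) * L c = T → deriv L c ≠ 0 →
      ∀ Ric g : Matrix (Fin n) (Fin n) ℝ, Ric.IsSymm → g.IsSymm →
        IsUnit g.det →
        deriv L c • Ric - ((1 / 2 : ℝ) * L c) • g = (T / n : ℝ) • g →
        (g⁻¹ * Ric).trace = c →
        Ric = (L c / (2 * deriv L c) + T / (n * deriv L c)) • g) := by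
  have hL' : AnalyticOnNhd ℝ L Set.univ := analyticOn_univ.mp hL
  have hF : AnalyticOnNhd ℝ
      (fun R => deriv L R * R - (n / 2 : ℝ) * L R - T) Set.univ := by
    apply AnalyticOnNhd.sub _ analyticOnNhd_const
    exact (hL'.deriv.mul (analyticOnNhd_id)).sub (analyticOnNhd_const.mul hL')
  constructor
  · intro x hx
    rw [accPt_iff_frequently] at hx
    have hfreq : ∃ᶠ z in 𝓝[≠] x,
        (fun R => deriv L R * R - (n / 2 : ℝ) * L R - T) z = 0 := by
      rw [frequently_nhdsWithin_iff]
      refine hx.mono ?_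
      rintro y ⟨hy1, hy2⟩
      exact ⟨sub_eq_zero.mpr hy2, hy1⟩
    obtain ⟨R, hR⟩ := hne
    exact hR (hF.eqOn_zero_of_preconnected_of_frequently_eq_zero
      isPreconnected_univ (Set.mem_univ x) hfreq (Set.mem_univ R))
  · intro c hc hLc Ric g _ _ _ hfield _
    have key : deriv L c • Ric = (L c / (2 * deriv L c) + T / (n * deriv L c)) •
        (deriv L c • g) := by
      have hn0 : (n : ℝ) ≠ 0 := Nat.cast_ne_zero.mpr (by omega)
      have : deriv L c • Ric = ((1 / 2 : ℝ) * L c + T / n) • g := by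
        rw [sub_eq_iff_eq_add] at hfield
        rw [hfield, ← add_smul, add_comm]
      rw [this, smul_smul]
      congr 1
      field_simp
    have := smul_right_injective (Matrix (Fin n) (Fin n) ℝ) hLc
    rw [smul_comm] at key
    exact this key
end
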